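/- Let G = (ℤ/2)³ act on the polynomial ring ℚ[t₀,t₁,t₂,t₃] by ℚ-algebra automorphisms, where the i-th generator (i = 1,2,3) sends tᵢ to −tᵢ and fixes the other three variables. Then the fixed subalgebra ℚ[t₀,t₁,t₂,t₃]^G equals the ℚ-subalgebra generated by t₀, t₁², t₂², and t₃². -/

import Mathlib

/-!
A sign change `tᵢ ↦ -tᵢ` multiplies the coefficient of a monomial `t^d` by `(-1)^(dᵢ)`, so over
`ℚ` a polynomial is fixed by it iff every monomial in its support has even exponent at `i`.
Hence the invariants are spanned by the monomials `t₀^a t₁^(2b) t₂^(2c) t₃^(2e)`, which lie in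
`ℚ[t₀, t₁², t₂², t₃²]`; conversely each of these generators is fixed by all three sign changes.
-/

noncomputable section
open MvPolynomial

abbrev R4 : Type := MvPolynomial (Fin 4) ℚ

theorem pow_mem_of_sq_mem {A S : Type*} [Monoid A] [SetLike S A] [SubmonoidClass S A] {s : S}
    {x : A} (hx : x ^ 2 ∈ s) {n : ℕ} (hn : Even n) : x ^ n ∈ s := by
  obtain ⟨k, rfl⟩ := hn
  rw [← two_mul, pow_mul]
  exact pow_mem hx k

namespace MvPolynomial

variable {ι R F : Type*} [CommRing R] [FunLike F (MvPolynomial ι R) (MvPolynomial ι R)]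
  [AlgHomClass F R (MvPolynomial ι R) (MvPolynomial ι R)]

def IsSignChange (f : F) (i : ι) : Prop :=
  f (X i) = -X i ∧ ∀ j ≠ i, f (X j) = X j

variable {f : F} {i : ι}

theorem IsSignChange.map_X_sq (hf : IsSignChange f i) (j : ι) : f (X j ^ 2) = X j ^ 2 := by
  rw [map_pow]
  by_cases h : j = i
  · rw [h, hf.1, neg_sq]
  · rw [hf.2 j h]

theorem IsSignChange.map_monomial (hf : IsSignChange f i) (e : ι →₀ ℕ) (c : R) :
    f (monomial e c) = monomial e ((-1) ^ e i * c) := by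
  classical
  have map_X_pow (j : ι) (k : ℕ) : f (X j ^ k) = (if j = i then (-1) ^ k else 1) * X j ^ k := by
    rw [map_pow]
    split_ifs with h
    · rw [h, hf.1, neg_pow]
    · rw [hf.2 j h, one_mul]
  have sign_prod : (e.prod fun j k => if j = i then ((-1) ^ k : MvPolynomial ι R) else 1) =
      C ((-1) ^ e i) := by
    rw [Finsupp.prod_ite_eq']
    split_ifs with h
    · simp
    · simp [Finsupp.notMem_support_iff.mp h]
  rw [monomial_eq, map_mul, ← algebraMap_eq, AlgHomClass.commutes, map_finsuppProd]
  simp only [map_X_pow]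
  rw [Finsupp.prod_mul, sign_prod, monomial_eq, C_mul, algebraMap_eq]
  ring

theorem IsSignChange.coeff_map (hf : IsSignChange f i) (p : MvPolynomial ι R) (d : ι →₀ ℕ) :
    coeff d (f p) = (-1) ^ d i * coeff d p := by
  classical
  induction p using MvPolynomial.induction_on' with
  | monomial e c =>
    rw [hf.map_monomial, coeff_monomial, coeff_monomial]
    split_ifs with h
    · rw [h]
    · rw [mul_zero]
  | add p q hp hq => rw [map_add, coeff_add, coeff_add, hp, hq, mul_add]

theorem IsSignChange.even_of_map_eq_self [IsAddTorsionFree R] (hf : IsSignChange f i)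
    {p : MvPolynomial ι R} (hp : f p = p) {d : ι →₀ ℕ} (hd : d ∈ p.support) : Even (d i) := by
  by_contra hodd
  have h := hf.coeff_map p d
  rw [hp, (Nat.not_even_iff_odd.mp hodd).neg_one_pow, neg_one_mul, self_eq_neg] at h
  exact mem_support_iff.mp hd h

theorem monomial_mem_of_forall_X_pow_mem {S : Subalgebra R (MvPolynomial ι R)} {d : ι →₀ ℕ}
    (h : ∀ j, X j ^ d j ∈ S) (c : R) : monomial d c ∈ S := by
  rw [monomial_eq]
  exact mul_mem (S.algebraMap_mem c) (Subalgebra.prod_mem S fun j _ => h j)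

theorem mem_of_forall_X_pow_mem {S : Subalgebra R (MvPolynomial ι R)} {p : MvPolynomial ι R}
    (h : ∀ d ∈ p.support, ∀ j, X j ^ d j ∈ S) : p ∈ S := by
  rw [p.as_sum]
  exact Subalgebra.sum_mem S fun d hd => monomial_mem_of_forall_X_pow_mem (h d hd) _

end MvPolynomial

theorem invariant_ring (σ₁ σ₂ σ₃ : R4 ≃ₐ[ℚ] R4)
    (h₁ : σ₁ (X 1) = -X 1) (h₁' : ∀ j : Fin 4, j ≠ 1 → σ₁ (X j) = X j)
    (h₂ : σ₂ (X 2) = -X 2) (h₂' : ∀ j : Fin 4, j ≠ 2 → σ₂ (X j) = X j)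
    (h₃ : σ₃ (X 3) = -X 3) (h₃' : ∀ j : Fin 4, j ≠ 3 → σ₃ (X j) = X j) :
    ∀ p : R4, (σ₁ p = p ∧ σ₂ p = p ∧ σ₃ p = p) ↔
      p ∈ Algebra.adjoin ℚ ({X 0, (X 1)^2, (X 2)^2, (X 3)^2} : Set R4) := by
  intro p
  have s₁ : IsSignChange σ₁ 1 := ⟨h₁, h₁'⟩
  have s₂ : IsSignChange σ₂ 2 := ⟨h₂, h₂'⟩
  have s₃ : IsSignChange σ₃ 3 := ⟨h₃, h₃'⟩
  have fixes_adjoin {k : Fin 4} {σ : R4 ≃ₐ[ℚ] R4} (hσ : IsSignChange σ k) (hk : k ≠ 0)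
      (hp : p ∈ Algebra.adjoin ℚ ({X 0, (X 1)^2, (X 2)^2, (X 3)^2} : Set R4)) : σ p = p := by
    refine AlgHom.adjoin_le_equalizer (σ : R4 →ₐ[ℚ] R4) (AlgHom.id ℚ R4) ?_ hp
    rintro x (rfl | rfl | rfl | rfl)
    · exact hσ.2 0 hk.symm
    all_goals exact hσ.map_X_sq _
  constructor
  · rintro ⟨f₁, f₂, f₃⟩
    refine mem_of_forall_X_pow_mem fun d hd j => ?_
    fin_cases j
    · exact pow_mem (Algebra.subset_adjoin (by simp)) _
    · exact pow_mem_of_sq_mem (Algebra.subset_adjoin (by simp)) (s₁.even_of_map_eq_self f₁ hd)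
    · exact pow_mem_of_sq_mem (Algebra.subset_adjoin (by simp)) (s₂.even_of_map_eq_self f₂ hd)
    · exact pow_mem_of_sq_mem (Algebra.subset_adjoin (by simp)) (s₃.even_of_map_eq_self f₃ hd)
  · intro hp
    exact ⟨fixes_adjoin s₁ (by decide) hp, fixes_adjoin s₂ (by decide) hp,
      fixes_adjoin s₃ (by decide) hp⟩

end
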